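/- If the Shtarkov integral S = ∫ e^{β_x x}/Z(β_x) dQ(x) of a one-dimensional exponential family is finite, then the minimax individual-sequence regret sup over strategies inf over x of [−log q(x) − (−log p_{β_x}(x))] is finite and equals log S. -/

import Mathlib

open scoped ENNReal NNReal
open MeasureTheory Real Set Filter Topology Asymptotics ProbabilityTheory

noncomputable section

/-- Partition function of the exponential family generated by `Q`. -/
def Z (Q : Measure ℝ) (β : ℝ) : ℝ≥0∞ := ∫⁻ x, ENNReal.ofReal (Real.exp (β * x)) ∂Q

/-- Canonical parameter space. -/
def Γcan (Q : Measure ℝ) : Set ℝ := {β | Z Q β < ⊤}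

/-- The member of the exponential family with canonical parameter `β`:
`dP_β/dQ = e^{βx}/Z(β)`. -/
def Pexp (Q : Measure ℝ) (β : ℝ) : Measure ℝ :=
  Q.withDensity (fun x => ENNReal.ofReal (Real.exp (β * x)) / Z Q β)

/-- Log-partition function. -/
def ψ (Q : Measure ℝ) (β : ℝ) : ℝ := Real.log (Z Q β).toReal

open Classical in
/-- Kullback–Leibler divergence (in nats), valued in `ℝ≥0∞`. -/
def KL (P Q' : Measure ℝ) : ℝ≥0∞ :=
  if P ≪ Q' ∧ Integrable (fun x => Real.log (P.rnDeriv Q' x).toReal) P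
  then ENNReal.ofReal (∫ x, Real.log (P.rnDeriv Q' x).toReal ∂P) else ⊤

/-- `Q` is supported on a half-line bounded below (left-truncated family). -/
def LeftTruncated (Q : Measure ℝ) : Prop := ∃ a : ℝ, ∀ᵐ x ∂Q, a ≤ x
lemma meas_expf (β : ℝ) : Measurable fun x : ℝ => ENNReal.ofReal (Real.exp (β * x)) :=
  (ENNReal.continuous_ofReal.comp (Real.continuous_exp.comp (continuous_const.mul continuous_id))).measurable

lemma Z_pos (Q : Measure ℝ) [IsProbabilityMeasure Q] (β : ℝ) : 0 < Z Q β := by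
  rw [Z, lintegral_pos_iff_support (meas_expf β)]
  have : (Function.support fun x : ℝ => ENNReal.ofReal (Real.exp (β * x))) = Set.univ := by
    ext x; simp [Function.mem_support, ENNReal.ofReal_eq_zero, not_le, Real.exp_pos]
  rw [this]
  simp

lemma mul_le_max_aux {a b c : ℝ} (h : c ∈ Icc a b) (x : ℝ) :
    c * x ≤ max (a * x) (b * x) := by
  rcases le_total 0 x with hx | hx
  · exact le_max_of_le_right (mul_le_mul_of_nonneg_right h.2 hx)
  · exact le_max_of_le_left (mul_le_mul_of_nonpos_right h.1 hx)

lemma expf_le_bound {a b c : ℝ} (h : c ∈ Icc a b) (x : ℝ) :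
    ENNReal.ofReal (Real.exp (c * x)) ≤
      ENNReal.ofReal (Real.exp (a * x)) + ENNReal.ofReal (Real.exp (b * x)) := by
  calc ENNReal.ofReal (Real.exp (c * x))
      ≤ max (ENNReal.ofReal (Real.exp (a * x))) (ENNReal.ofReal (Real.exp (b * x))) := by
        rcases max_cases (a * x) (b * x) with ⟨he, _⟩ | ⟨he, _⟩
        · exact le_max_of_le_left (ENNReal.ofReal_le_ofReal
            (Real.exp_le_exp.mpr (by simpa [he] using mul_le_max_aux h x)))
        · exact le_max_of_le_right (ENNReal.ofReal_le_ofReal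
            (Real.exp_le_exp.mpr (by simpa [he] using mul_le_max_aux h x)))
    _ ≤ _ := max_le_add_of_nonneg zero_le zero_le

lemma Z_mem_Icc (Q : Measure ℝ) {a b : ℝ} (ha : a ∈ Γcan Q) (hb : b ∈ Γcan Q) {c : ℝ}
    (hc : c ∈ Icc a b) : c ∈ Γcan Q := by
  have : Z Q c ≤ Z Q a + Z Q b := by
    rw [Z, Z, Z, ← lintegral_add_left (meas_expf a)]
    exact lintegral_mono fun x => expf_le_bound hc x
  exact lt_of_le_of_lt this (ENNReal.add_lt_top.mpr ⟨ha, hb⟩)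

lemma tendsto_Z (Q : Measure ℝ) {a b : ℝ} (ha : a ∈ Γcan Q) (hb : b ∈ Γcan Q)
    {u : ℕ → ℝ} (hu : ∀ n, u n ∈ Icc a b) {c : ℝ} (hc : Tendsto u atTop (𝓝 c)) :
    Tendsto (fun n => Z Q (u n)) atTop (𝓝 (Z Q c)) := by
  refine tendsto_lintegral_of_dominated_convergence
    (fun x => ENNReal.ofReal (Real.exp (a * x)) + ENNReal.ofReal (Real.exp (b * x)))
    (fun n => meas_expf (u n)) (fun n => Eventually.of_forall fun x => expf_le_bound (hu n) x)
    ?_ (Eventually.of_forall fun x => ?_)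
  · rw [lintegral_add_left (meas_expf a)]
    exact (ENNReal.add_lt_top.mpr ⟨ha, hb⟩).ne
  · exact (ENNReal.continuous_ofReal.tendsto _).comp
      ((Real.continuous_exp.tendsto _).comp ((hc.mul_const x)))

lemma le_sup_rat (Q : Measure ℝ) [IsProbabilityMeasure Q] {b β₀ : ℝ} (hb : b ∈ Γcan Q)
    (h0 : β₀ ∈ Γcan Q) (x : ℝ) :
    ENNReal.ofReal (Real.exp (b * x)) / Z Q b ≤
      ⨆ β ∈ ((Set.range ((↑) : ℚ → ℝ) ∩ Γcan Q) ∪ {β₀}),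
        ENNReal.ofReal (Real.exp (β * x)) / Z Q β := by
  by_cases hbe : b = β₀
  · subst hbe
    exact le_biSup (fun β => ENNReal.ofReal (Real.exp (β * x)) / Z Q β)
      (mem_union_right _ (mem_singleton _))
  · have hIne : min b β₀ < max b β₀ := min_lt_max.mpr hbe
    have hmin : min b β₀ ∈ Γcan Q := by rcases min_cases b β₀ with ⟨h, _⟩ | ⟨h, _⟩ <;> rw [h] <;> assumption
    have hmaxm : max b β₀ ∈ Γcan Q := by rcases max_cases b β₀ with ⟨h, _⟩ | ⟨h, _⟩ <;> rw [h] <;> assumption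
    have hIsub : Icc (min b β₀) (max b β₀) ⊆ Γcan Q := fun c hc => Z_mem_Icc Q hmin hmaxm hc
    have hbc : b ∈ closure (Ioo (min b β₀) (max b β₀) ∩ Set.range ((↑) : ℚ → ℝ)) := by
      have hd : Dense (Set.range ((↑) : ℚ → ℝ)) := Rat.denseRange_cast
      have h1 : Ioo (min b β₀) (max b β₀) ⊆
          closure (Ioo (min b β₀) (max b β₀) ∩ Set.range ((↑) : ℚ → ℝ)) :=
        hd.open_subset_closure_inter isOpen_Ioo
      have hbI : b ∈ closure (Ioo (min b β₀) (max b β₀)) := by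
        have : b ∈ Icc (min b β₀) (max b β₀) := Set.mem_Icc.mpr ⟨min_le_left _ _, le_max_left _ _⟩
        rwa [closure_Ioo hIne.ne]
      have h2 := closure_mono h1 hbI
      rwa [closure_closure] at h2
    obtain ⟨u, hu, hulim⟩ := mem_closure_iff_seq_limit.mp hbc
    have huI : ∀ n, u n ∈ Icc (min b β₀) (max b β₀) := fun n => Ioo_subset_Icc_self (hu n).1
    have hZt : Tendsto (fun n => Z Q (u n)) atTop (𝓝 (Z Q b)) := tendsto_Z Q hmin hmaxm huI hulim
    have hnum : Tendsto (fun n => ENNReal.ofReal (Real.exp (u n * x))) atTop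
        (𝓝 (ENNReal.ofReal (Real.exp (b * x)))) :=
      (ENNReal.continuous_ofReal.tendsto _).comp
        ((Real.continuous_exp.tendsto _).comp (hulim.mul_const x))
    have hgt : Tendsto (fun n => ENNReal.ofReal (Real.exp (u n * x)) / Z Q (u n)) atTop
        (𝓝 (ENNReal.ofReal (Real.exp (b * x)) / Z Q b)) :=
      ENNReal.Tendsto.div hnum (Or.inr (Z_pos Q b).ne') hZt (Or.inl hb.ne)
    refine le_of_tendsto hgt (Eventually.of_forall fun n => ?_)
    exact le_biSup (fun β => ENNReal.ofReal (Real.exp (β * x)) / Z Q β)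
      (mem_union_left _ (Set.mem_inter (hu n).2 (hIsub (huI n))))

/-- if the Shtarkov integral S is finite then the minimax
individual-sequence regret is finite and equal to log S.  Here βml x is the
maximum-likelihood parameter for outcome x, a strategy is a sub-probability
density q w.r.t. Q, and the regret of q at x is log p_{β_x}(x) − log q(x). -/
theorem minimax_regret_eq_log_shtarkov (Q : Measure ℝ) [IsProbabilityMeasure Q]
    (βml : ℝ → ℝ) (hml : ∀ x, βml x ∈ Γcan Q)
    (hmax : ∀ x, ∀ β ∈ Γcan Q,
      ENNReal.ofReal (Real.exp (β * x)) / Z Q β ≤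
        ENNReal.ofReal (Real.exp (βml x * x)) / Z Q (βml x))
    (S : ℝ≥0∞)
    (hS : S = ∫⁻ x, ENNReal.ofReal (Real.exp (βml x * x)) / Z Q (βml x) ∂Q)
    (hSfin : S ≠ ⊤) :
    (⨅ q ∈ {q : ℝ → ℝ≥0∞ | Measurable q ∧ ∫⁻ x, q x ∂Q ≤ 1},
        ⨆ x : ℝ,
          (ENNReal.log (ENNReal.ofReal (Real.exp (βml x * x)) / Z Q (βml x))
            - ENNReal.log (q x))) = (ENNReal.log S : EReal) ∧
    (⨅ q ∈ {q : ℝ → ℝ≥0∞ | Measurable q ∧ ∫⁻ x, q x ∂Q ≤ 1},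
        ⨆ x : ℝ,
          (ENNReal.log (ENNReal.ofReal (Real.exp (βml x * x)) / Z Q (βml x))
            - ENNReal.log (q x))) < (⊤ : EReal) := by
  classical
  set F : ℝ → ℝ≥0∞ := fun x => ENNReal.ofReal (Real.exp (βml x * x)) / Z Q (βml x) with hF
  have hZpos : ∀ β, 0 < Z Q β := Z_pos Q
  have hFpos : ∀ x, F x ≠ 0 := fun x =>
    (ENNReal.div_pos (ENNReal.ofReal_pos.mpr (Real.exp_pos _)).ne' (hml x).ne).ne'
  have hFtop : ∀ x, F x ≠ ⊤ := fun x =>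
    (ENNReal.div_lt_top ENNReal.ofReal_ne_top (hZpos _).ne').ne
  have hint : ∀ β ∈ Γcan Q, ∫⁻ x, ENNReal.ofReal (Real.exp (β * x)) / Z Q β ∂Q = 1 := by
    intro β hβ
    simp_rw [div_eq_mul_inv]
    rw [lintegral_mul_const' _ _ (ENNReal.inv_ne_top.mpr (hZpos β).ne')]
    exact ENNReal.mul_inv_cancel (hZpos β).ne' hβ.ne
  have hS1 : (1 : ℝ≥0∞) ≤ S := by
    rw [hS, ← hint (βml 0) (hml 0)]
    exact lintegral_mono fun x => hmax x (βml 0) (hml 0)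
  have hS0 : S ≠ 0 := by
    intro h; rw [h] at hS1; simp at hS1
  set D : Set ℝ := (Set.range ((↑) : ℚ → ℝ) ∩ Γcan Q) ∪ {βml 0} with hD
  have hDc : D.Countable :=
    (Set.Countable.mono Set.inter_subset_left (Set.countable_range _)).union
      (Set.countable_singleton _)
  have hFeq : F = fun x => ⨆ β ∈ D, ENNReal.ofReal (Real.exp (β * x)) / Z Q β := by
    funext x
    refine le_antisymm (le_sup_rat Q (hml x) (hml 0) x) (iSup₂_le fun β hβ => ?_)
    have hβΓ : β ∈ Γcan Q := by
      rcases hβ with ⟨_, h⟩ | h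
      · exact h
      · exact (mem_singleton_iff.mp h) ▸ hml 0
    exact hmax x β hβΓ
  have hFmeas : Measurable F := by
    rw [hFeq]
    exact Measurable.biSup D hDc (fun β _ => (meas_expf β).div_const _)
  have hlogS_ne_top : ENNReal.log S ≠ ⊤ := fun h => hSfin (ENNReal.log_eq_top_iff.mp h)
  have hlogS_ne_bot : ENNReal.log S ≠ ⊥ := fun h => hS0 (ENNReal.log_eq_bot_iff.mp h)
  set SS : Set (ℝ → ℝ≥0∞) := {q : ℝ → ℝ≥0∞ | Measurable q ∧ ∫⁻ x, q x ∂Q ≤ 1} with hSS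
  -- upper bound
  have hub : (⨅ q ∈ SS, ⨆ x : ℝ, (ENNReal.log (F x) - ENNReal.log (q x))) ≤
      (ENNReal.log S : EReal) := by
    have hqmem : (fun x => F x * S⁻¹) ∈ SS := by
      refine ⟨hFmeas.mul_const _, ?_⟩
      rw [lintegral_mul_const' _ _ (ENNReal.inv_ne_top.mpr hS0), ← hS,
        ENNReal.mul_inv_cancel hS0 hSfin]
    refine le_trans (iInf₂_le (fun x => F x * S⁻¹) hqmem) ?_
    have hval : ∀ x : ℝ, ENNReal.log (F x) - ENNReal.log (F x * S⁻¹) = ENNReal.log S := by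
      intro x
      rw [ENNReal.log_mul_add, ENNReal.log_inv]
      obtain ⟨a, ha⟩ : ∃ a : ℝ, ENNReal.log (F x) = (a : EReal) :=
        ⟨(ENNReal.log (F x)).toReal, (EReal.coe_toReal
          (by simp [hFtop x]) (by simp [hFpos x])).symm⟩
      obtain ⟨s, hs⟩ : ∃ s : ℝ, ENNReal.log S = (s : EReal) :=
        ⟨(ENNReal.log S).toReal, (EReal.coe_toReal hlogS_ne_top hlogS_ne_bot).symm⟩
      rw [ha, hs, ← EReal.coe_neg, ← EReal.coe_add, ← EReal.coe_sub]
      norm_cast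
      ring
    have hcv : (⨆ x : ℝ, (ENNReal.log (F x) - ENNReal.log (F x * S⁻¹)))
        = (ENNReal.log S : EReal) := by
      simp_rw [hval]
      exact iSup_const
    exact le_of_eq hcv
  -- lower bound
  have hlb : ∀ q ∈ SS, (ENNReal.log S : EReal) ≤
      ⨆ x : ℝ, (ENNReal.log (F x) - ENNReal.log (q x)) := by
    intro q hq
    set M : EReal := ⨆ x : ℝ, (ENNReal.log (F x) - ENNReal.log (q x)) with hM
    by_cases hMtop : M = ⊤
    · rw [hMtop]; exact le_top
    by_cases hMbot : M = ⊥
    · exfalso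
      have hqtop : ∀ x, q x = ⊤ := by
        intro x
        by_contra hne
        have h1 : ENNReal.log (F x) - ENNReal.log (q x) ≤ M :=
          le_iSup (fun x => ENNReal.log (F x) - ENNReal.log (q x)) x
        rw [hMbot, le_bot_iff] at h1
        have hA : ENNReal.log (F x) ≠ ⊥ := by simp [hFpos x]
        have hB : -ENNReal.log (q x) ≠ ⊥ := by
          simp only [ne_eq, EReal.neg_eq_bot_iff, ENNReal.log_eq_top_iff]
          exact hne
        rw [sub_eq_add_neg] at h1
        exact (EReal.add_eq_bot_iff.mp h1).elim hA hB
      have h2 : ∫⁻ x, q x ∂Q = ⊤ := by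
        rw [show q = fun _ => (⊤ : ℝ≥0∞) from funext hqtop]
        simp [lintegral_const, measure_univ]
      have := hq.2
      rw [h2] at this
      exact absurd this (by simp)
    obtain ⟨m, hm⟩ : ∃ m : ℝ, M = (m : EReal) :=
      ⟨M.toReal, (EReal.coe_toReal hMtop hMbot).symm⟩
    set c : ℝ≥0∞ := ENNReal.ofReal (Real.exp (-m)) with hc
    have hc0 : c ≠ 0 := (ENNReal.ofReal_pos.mpr (Real.exp_pos _)).ne'
    have hctop : c ≠ ⊤ := ENNReal.ofReal_ne_top
    have hqge : ∀ x, F x * c ≤ q x := by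
      intro x
      have hterm : ENNReal.log (F x) - ENNReal.log (q x) ≤ (m : EReal) := by
        rw [← hm]
        exact le_iSup (fun x => ENNReal.log (F x) - ENNReal.log (q x)) x
      have hFxpos : 0 < (F x).toReal := ENNReal.toReal_pos (hFpos x) (hFtop x)
      have hA : ENNReal.log (F x) = ((Real.log (F x).toReal : ℝ) : EReal) :=
        ENNReal.log_pos_real' hFxpos
      set a : ℝ := Real.log (F x).toReal with hadef
      have hqx : ENNReal.ofReal (Real.exp (a - m)) ≤ q x := by
        rcases eq_or_ne (q x) ⊤ with h | h
        · rw [h]; exact le_top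
        rcases eq_or_ne (q x) 0 with h0 | h0
        · exfalso
          rw [h0, ENNReal.log_zero, hA, sub_eq_add_neg] at hterm
          simp at hterm
        · have hqpos : 0 < (q x).toReal := ENNReal.toReal_pos h0 h
          have hB : ENNReal.log (q x) = ((Real.log (q x).toReal : ℝ) : EReal) :=
            ENNReal.log_pos_real' hqpos
          rw [hA, hB, ← EReal.coe_sub] at hterm
          have h3 : a - Real.log (q x).toReal ≤ m := by exact_mod_cast hterm
          have h4 : Real.exp (a - m) ≤ (q x).toReal := by
            have h5 : a - m ≤ Real.log (q x).toReal := by linarith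
            have := Real.exp_le_exp.mpr h5
            rwa [Real.exp_log hqpos] at this
          calc ENNReal.ofReal (Real.exp (a - m)) ≤ ENNReal.ofReal (q x).toReal :=
              ENNReal.ofReal_le_ofReal h4
            _ = q x := ENNReal.ofReal_toReal h
      have hFc : F x * c = ENNReal.ofReal (Real.exp (a - m)) := by
        have he : Real.exp (a - m) = (F x).toReal * Real.exp (-m) := by
          rw [sub_eq_add_neg, Real.exp_add, hadef, Real.exp_log hFxpos]
        rw [he, ENNReal.ofReal_mul ENNReal.toReal_nonneg, ENNReal.ofReal_toReal (hFtop x), hc]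
      rw [hFc]
      exact hqx
    have hint2 : S * c ≤ 1 := by
      calc S * c = ∫⁻ x, F x * c ∂Q := by rw [hS, lintegral_mul_const' _ _ hctop]
        _ ≤ ∫⁻ x, q x ∂Q := lintegral_mono hqge
        _ ≤ 1 := hq.2
    have hcinv : c⁻¹ = ENNReal.ofReal (Real.exp m) := by
      rw [hc, Real.exp_neg, ENNReal.ofReal_inv_of_pos (Real.exp_pos m), inv_inv]
    have hSle : S ≤ ENNReal.ofReal (Real.exp m) := by
      have h1 : S * c * c⁻¹ ≤ 1 * c⁻¹ := mul_le_mul_left hint2 _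
      rwa [mul_assoc, ENNReal.mul_inv_cancel hc0 hctop, mul_one, one_mul, hcinv] at h1
    calc (ENNReal.log S : EReal) ≤ ENNReal.log (ENNReal.ofReal (Real.exp m)) :=
        ENNReal.log_monotone hSle
      _ = (m : EReal) := by rw [ENNReal.log_ofReal_of_pos (Real.exp_pos m), Real.log_exp]
      _ = M := hm.symm
  have heq : (⨅ q ∈ SS, ⨆ x : ℝ, (ENNReal.log (F x) - ENNReal.log (q x))) =
      (ENNReal.log S : EReal) := le_antisymm hub (le_iInf₂ hlb)
  exact ⟨heq, heq ▸ Ne.lt_top hlogS_ne_top⟩
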